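/- Let X be a reflexive Banach space and f, g : X → ℝ ∪ {+∞} proper convex lower semicontinuous functions. If dom f ∩ dom g ≠ ∅, dom f* ∩ (−dom g*) ≠ ∅, the function f □ ĝ (where ĝ(x) = g(−x)) is lower semicontinuous at 0 and exact at 0, and the function f* □ g* is lower semicontinuous at 0 and exact at 0, then 0 ∈ R(∂f + ∂g), i.e., there exists x ∈ X with 0 ∈ ∂f(x) + ∂g(x). -/

import Mathlib

/-!
The strict epigraph of `f □ ĝ` is the Minkowski sum of the strict epigraphs of `f` and `ĝ`, hence
convex. Since `f □ ĝ` is lower semicontinuous and finite at `0`, Hahn–Banach separation of `(0, r)`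
from that epigraph yields, for every `r < (f □ ĝ)(0)`, a functional `l` with `l + r ≤ f □ ĝ`, i.e.
`f*(l) + g*(-l) ≤ -r`; hence `(f* □ g*)(0) ≤ -(f □ ĝ)(0)`. Write both convolutions at their
exactness points: `(f □ ĝ)(0) = f(x₀) + g(x₀)` and `(f* □ g*)(0) = f*(s) + g*(-s)`. The
Fenchel–Young inequalities `s x₀ ≤ f(x₀) + f*(s)` and `-s x₀ ≤ g(x₀) + g*(-s)` then add up to an
equality, so both are equalities, which says `s ∈ ∂f(x₀)` and `-s ∈ ∂g(x₀)`.
-/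

noncomputable section

open scoped Topology Pointwise

variable {X : Type*} [NormedAddCommGroup X] [NormedSpace ℝ X]

/-- The topological dual of a real normed space. -/
abbrev Dd (X : Type*) [NormedAddCommGroup X] [NormedSpace ℝ X] := StrongDual ℝ X

/-- Convexity for extended-real-valued functions. -/
def EConvexOn {E : Type*} [AddCommMonoid E] [Module ℝ E] (f : E → EReal) : Prop :=
  ∀ x y : E, ∀ a b : ℝ, 0 ≤ a → 0 ≤ b → a + b = 1 →
    f (a • x + b • y) ≤ (a : EReal) * f x + (b : EReal) * f y

/-- Monotonicity of a multivalued operator `T : X ⇉ X*`. -/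
def IsMonotoneOp (T : X → Set (Dd X)) : Prop :=
  ∀ ⦃x y xs ys⦄, xs ∈ T x → ys ∈ T y → 0 ≤ (ys - xs) (y - x)

/-- Maximal monotonicity of a multivalued operator `T : X ⇉ X*`. -/
def IsMaxMonotone (T : X → Set (Dd X)) : Prop :=
  IsMonotoneOp T ∧ ∀ x xs, (∀ y ys, ys ∈ T y → 0 ≤ (xs - ys) (x - y)) → xs ∈ T x

/-- Fenchel conjugate of a function on `X × X*`, evaluated on `X* × X`
(the space `X` identified with its image in `X**`). -/
def conj2 (F : X × Dd X → EReal) : Dd X × X → EReal :=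
  fun p => ⨆ q : X × Dd X, ((p.1 q.1 + q.2 p.2 : ℝ) : EReal) - F q

/-- Fenchel conjugate of a function on `X`. -/
def conj1 (f : X → EReal) : Dd X → EReal :=
  fun xs => ⨆ x : X, ((xs x : ℝ) : EReal) - f x

/-- `F` is a representative function of `T`: convex, lower semicontinuous,
everywhere above the duality product and coinciding with it on the graph of `T`. -/
def IsRepr (T : X → Set (Dd X)) (F : X × Dd X → EReal) : Prop :=
  EConvexOn F ∧ LowerSemicontinuous F ∧
  (∀ p : X × Dd X, ((p.2 p.1 : ℝ) : EReal) ≤ F p) ∧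
  (∀ p : X × Dd X, p.2 ∈ T p.1 → F p = ((p.2 p.1 : ℝ) : EReal))

/-- `f̂(x, x*) = f(x, -x*)`. -/
def hatF (F : X × Dd X → EReal) : X × Dd X → EReal := fun p => F (p.1, -p.2)

/-- Effective domain. -/
def edom {E : Type*} (F : E → EReal) : Set E := {p | F p ≠ ⊤}

/-- Infimal convolution. -/
def infConv {E : Type*} [AddCommGroup E] (g h : E → EReal) : E → EReal :=
  fun y => ⨅ u : E, g (y - u) + h u

/-- Exactness of the infimal convolution at a point. -/
def ExactAt {E : Type*} [AddCommGroup E] (g h : E → EReal) (y : E) : Prop :=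
  ∃ u : E, infConv g h y = g (y - u) + h u

/-- Convex subdifferential of an extended-real-valued function (empty where the
value is not finite). -/
def esubdiff (h : X → EReal) (x : X) : Set (Dd X) :=
  {xs | h x ≠ ⊤ ∧ h x ≠ ⊥ ∧ ∀ y, h x + ((xs (y - x) : ℝ) : EReal) ≤ h y}

/-- Reflexivity of a normed space. -/
def Reflexive' (X : Type*) [NormedAddCommGroup X] [NormedSpace ℝ X] : Prop :=
  Function.Surjective (NormedSpace.inclusionInDoubleDual ℝ X)

/-- The Fitzpatrick function of `T`. -/
def fitz (T : X → Set (Dd X)) : X × Dd X → EReal :=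
  fun p => ⨆ q : {q : X × Dd X // q.2 ∈ T q.1},
    ((q.1.2 p.1 + p.2 q.1.1 - q.1.2 q.1.1 : ℝ) : EReal)

namespace EReal

lemma coe_sub_add_coe_sub_le {p q r : ℝ} {F G : EReal} (h : ((p - q + r : ℝ) : EReal) ≤ F + G) :
    ((p : EReal) - F) + ((-q : ℝ) - G) ≤ -r := by
  induction F <;> induction G <;> simp_all [-EReal.coe_add, -EReal.coe_sub]
  norm_cast at *
  linarith

lemma eq_coe_and_eq_coe_of_add_le {x y : ℝ} {P Q : EReal} (hP : x ≤ P) (hQ : y ≤ Q)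
    (h : P + Q ≤ ((x + y : ℝ) : EReal)) : P = x ∧ Q = y := by
  induction P <;> induction Q <;> simp_all [-EReal.coe_add]
  norm_cast at *
  constructor <;> linarith

end EReal

section Epigraph

variable {E : Type*}

def strictEpigraph (f : E → EReal) : Set (E × ℝ) := {p | f p.1 < p.2}

@[simp]
lemma mem_strictEpigraph {f : E → EReal} {p : E × ℝ} : p ∈ strictEpigraph f ↔ f p.1 < p.2 :=
  Iff.rfl

variable [AddCommGroup E]

lemma strictEpigraph_infConv {f g : E → EReal} (hf : ∀ x, f x ≠ ⊥) (hg : ∀ x, g x ≠ ⊥) :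
    strictEpigraph (infConv f g) = strictEpigraph f + strictEpigraph g := by
  ext ⟨x, t⟩
  simp only [Set.mem_add, mem_strictEpigraph, Prod.exists, Prod.mk_add_mk, Prod.mk.injEq]
  constructor
  · intro h
    obtain ⟨u, hu⟩ := iInf_lt_iff.1 h
    obtain ⟨hfu, hgu⟩ := (EReal.add_ne_top_iff_ne_top₂ (hf _) (hg u)).1 hu.ne_top
    obtain ⟨p, hp⟩ : ∃ p : ℝ, f (x - u) = p := ⟨_, (EReal.coe_toReal hfu (hf _)).symm⟩
    obtain ⟨q, hq⟩ : ∃ q : ℝ, g u = q := ⟨_, (EReal.coe_toReal hgu (hg u)).symm⟩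
    rw [hp, hq, ← EReal.coe_add, EReal.coe_lt_coe_iff] at hu
    refine ⟨x - u, p + (t - p - q) / 2, ?_, u, q + (t - p - q) / 2, ?_, sub_add_cancel x u, by ring⟩
    · rw [hp, EReal.coe_lt_coe_iff]; linarith
    · rw [hq, EReal.coe_lt_coe_iff]; linarith
  · rintro ⟨y, t₁, hy, u, t₂, hu, rfl, rfl⟩
    calc infConv f g (y + u) ≤ f (y + u - u) + g u := iInf_le _ u
      _ = f y + g u := by rw [add_sub_cancel_right]
      _ < t₁ + t₂ := EReal.add_lt_add hy hu

variable [Module ℝ E]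

lemma EConvexOn.comp_linearMap {F : Type*} [AddCommGroup F] [Module ℝ F] {f : E → EReal}
    (hf : EConvexOn f) (L : F →ₗ[ℝ] E) : EConvexOn (f ∘ L) := by
  intro x y a b ha hb hab
  simpa using hf (L x) (L y) a b ha hb hab

lemma EConvexOn.convex_strictEpigraph {f : E → EReal} (hf : EConvexOn f) (hbot : ∀ x, f x ≠ ⊥) :
    Convex ℝ (strictEpigraph f) := by
  rintro ⟨x, t⟩ hx ⟨y, s⟩ hy a b ha hb hab
  simp only [mem_strictEpigraph] at hx hy ⊢
  obtain ⟨p, hp⟩ : ∃ p : ℝ, f x = p := ⟨_, (EReal.coe_toReal hx.ne_top (hbot x)).symm⟩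
  obtain ⟨q, hq⟩ : ∃ q : ℝ, f y = q := ⟨_, (EReal.coe_toReal hy.ne_top (hbot y)).symm⟩
  rw [hp, EReal.coe_lt_coe_iff] at hx
  rw [hq, EReal.coe_lt_coe_iff] at hy
  calc f (a • x + b • y) ≤ a * f x + b * f y := hf x y a b ha hb hab
    _ = ((a * p + b * q : ℝ) : EReal) := by rw [hp, hq]; norm_cast
    _ < ((a • (x, t) + b • (y, s)).2 : ℝ) := by
      simp only [Prod.snd_add, Prod.smul_snd, smul_eq_mul, EReal.coe_lt_coe_iff]
      rcases ha.eq_or_lt with rfl | ha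
      · simp only [zero_add] at hab
        simp [hab, hy]
      · nlinarith [mul_lt_mul_of_pos_left hx ha, mul_le_mul_of_nonneg_left hy.le hb]

lemma convex_strictEpigraph_infConv {f g : E → EReal} (hf : EConvexOn f) (hg : EConvexOn g)
    (hfb : ∀ x, f x ≠ ⊥) (hgb : ∀ x, g x ≠ ⊥) : Convex ℝ (strictEpigraph (infConv f g)) := by
  rw [strictEpigraph_infConv hfb hgb]
  exact (hf.convex_strictEpigraph hfb).add (hg.convex_strictEpigraph hgb)

end Epigraph

section Separation

variable {E : Type*} [TopologicalSpace E]

lemma notMem_closure_strictEpigraph {h : E → EReal} {x₀ : E} {r : ℝ}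
    (hlsc : LowerSemicontinuousAt h x₀) (hr : (r : EReal) < h x₀) :
    (x₀, r) ∉ closure (strictEpigraph h) := by
  obtain ⟨r', hrr', hr'⟩ := EReal.exists_between_coe_real hr
  obtain ⟨U, hU, hUr'⟩ := (hlsc _ hr').exists_mem
  rw [mem_closure_iff_nhds]
  intro hcl
  obtain ⟨p, ⟨hpU, hpr'⟩, hp⟩ :=
    hcl _ (prod_mem_nhds hU (Iio_mem_nhds (EReal.coe_lt_coe_iff.1 hrr')))
  exact (hUr' p.1 hpU).not_gt (hp.trans (EReal.coe_lt_coe_iff.2 hpr'))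

variable [AddCommGroup E] [IsTopologicalAddGroup E] [Module ℝ E] [ContinuousSMul ℝ E]
  [LocallyConvexSpace ℝ E]

theorem exists_affine_minorant_of_lowerSemicontinuousAt {h : E → EReal} {x₀ : E}
    (hconv : Convex ℝ (strictEpigraph h)) (hlsc : LowerSemicontinuousAt h x₀) (htop : h x₀ ≠ ⊤)
    {r : ℝ} (hr : (r : EReal) < h x₀) :
    ∃ l : StrongDual ℝ E, ∀ x, ((l (x - x₀) + r : ℝ) : EReal) ≤ h x := by
  obtain ⟨φ, u, hφr, hφS⟩ := geometric_hahn_banach_point_closed hconv.closure isClosed_closure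
    (notMem_closure_strictEpigraph hlsc hr)
  set L := φ.comp (ContinuousLinearMap.inl ℝ E ℝ)
  set c := φ (0, 1)
  have hφ : ∀ x t, φ (x, t) = L x + t * c := fun x t => by
    rw [show (x, t) = ((x, 0) : E × ℝ) + t • (0, 1) by ext <;> simp, map_add, map_smul,
      smul_eq_mul]
    rfl
  have hsep : ∀ x (t : ℝ), h x < t → L x₀ + r * c < L x + t * c := fun x t hxt =>
    (hφ x₀ r ▸ hφr).trans (hφ x t ▸ hφS _ (subset_closure hxt))
  -- `h x₀ < ⊤` is what keeps the separating hyperplane from being vertical.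
  have hc : 0 < c := by
    obtain ⟨t, ht, -⟩ := EReal.exists_between_coe_real htop.lt_top
    have hrt : r < t := EReal.coe_lt_coe_iff.1 (hr.trans ht)
    nlinarith [hsep x₀ t ht]
  refine ⟨-c⁻¹ • L, fun x => EReal.le_of_forall_lt_iff_le.1 fun t ht => ?_⟩
  have key := hsep x t ht
  rw [EReal.coe_le_coe_iff, smul_apply, map_sub, smul_eq_mul,
    show -c⁻¹ * (L x - L x₀) + r = r - (L x - L x₀) / c by ring, sub_le_comm, le_div_iff₀ hc]
  linarith

end Separation

lemma le_conj1 (f : X → EReal) (s : Dd X) (x : X) : ((s x : ℝ) : EReal) - f x ≤ conj1 f s :=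
  le_iSup (fun y => ((s y : ℝ) : EReal) - f y) x

lemma mem_esubdiff_of_conj1_le {f : X → EReal} {x : X} {s : Dd X} {a : ℝ} (hx : f x = a)
    (hs : conj1 f s ≤ ((s x - a : ℝ) : EReal)) : s ∈ esubdiff f x := by
  refine ⟨by simp [hx], by simp [hx], fun y => ?_⟩
  have hy := (le_conj1 f s y).trans hs
  rw [hx, map_sub]
  revert hy
  generalize f y = F
  induction F <;> simp [-EReal.coe_add, -EReal.coe_sub]
  norm_cast
  intro hy
  linarith

lemma conj1_add_conj1_neg_le {f g : X → EReal} {l : Dd X} {r : ℝ}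
    (h : ∀ x, ((l x + r : ℝ) : EReal) ≤ infConv f (fun x => g (-x)) x) :
    conj1 f l + conj1 g (-l) ≤ -r := by
  have hcross : ∀ z w, ((l z - l w + r : ℝ) : EReal) ≤ f z + g w := fun z w => by
    simpa [map_sub] using (h (z - w)).trans (iInf_le _ (-w))
  refine EReal.add_le_of_forall_lt fun a ha b hb => ?_
  obtain ⟨z, hz⟩ := lt_iSup_iff.1 ha
  obtain ⟨w, hw⟩ := lt_iSup_iff.1 hb
  calc a + b ≤ (((l z : ℝ) : EReal) - f z) + (((-l) w : ℝ) - g w) := add_le_add hz.le hw.le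
    _ ≤ -r := EReal.coe_sub_add_coe_sub_le (hcross z w)

theorem infConv_le_neg_infConv_conj1 {f g : X → EReal} (hf : EConvexOn f) (hg : EConvexOn g)
    (hfb : ∀ x, f x ≠ ⊥) (hgb : ∀ x, g x ≠ ⊥)
    (hlsc : LowerSemicontinuousAt (infConv f fun x => g (-x)) 0)
    (htop : infConv f (fun x => g (-x)) 0 ≠ ⊤) :
    infConv f (fun x => g (-x)) 0 ≤ -infConv (conj1 f) (conj1 g) 0 := by
  have hconv : Convex ℝ (strictEpigraph (infConv f fun x => g (-x))) :=
    convex_strictEpigraph_infConv hf (hg.comp_linearMap (-LinearMap.id)) hfb fun x => hgb (-x)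
  refine EReal.ge_of_forall_gt_iff_ge.1 fun r hr => EReal.le_neg.2 ?_
  obtain ⟨l, hl⟩ := exists_affine_minorant_of_lowerSemicontinuousAt hconv hlsc htop hr
  calc infConv (conj1 f) (conj1 g) 0 ≤ conj1 f (0 - -l) + conj1 g (-l) := iInf_le _ (-l)
    _ = conj1 f l + conj1 g (-l) := by rw [zero_sub, neg_neg]
    _ ≤ -r := conj1_add_conj1_neg_le fun x => by simpa only [sub_zero] using hl x

lemma mem_esubdiff_and_neg_mem_esubdiff {f g : X → EReal} {x : X} {s : Dd X}
    (hfb : f x ≠ ⊥) (hgb : g x ≠ ⊥) (htop : f x + g x ≠ ⊤)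
    (h : f x + g x ≤ -(conj1 f s + conj1 g (-s))) :
    s ∈ esubdiff f x ∧ -s ∈ esubdiff g x := by
  obtain ⟨hft, hgt⟩ := (EReal.add_ne_top_iff_ne_top₂ hfb hgb).1 htop
  obtain ⟨a, ha⟩ : ∃ a : ℝ, f x = a := ⟨_, (EReal.coe_toReal hft hfb).symm⟩
  obtain ⟨b, hb⟩ : ∃ b : ℝ, g x = b := ⟨_, (EReal.coe_toReal hgt hgb).symm⟩
  have hfy : ((s x - a : ℝ) : EReal) ≤ conj1 f s := by
    rw [EReal.coe_sub, ← ha]; exact le_conj1 f s x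
  have hgy : (((-s) x - b : ℝ) : EReal) ≤ conj1 g (-s) := by
    rw [EReal.coe_sub, ← hb]; exact le_conj1 g (-s) x
  have hsum : conj1 f s + conj1 g (-s) ≤ ((s x - a + ((-s) x - b) : ℝ) : EReal) := by
    rw [show s x - a + ((-s) x - b) = -(a + b) by rw [neg_apply]; ring,
      EReal.coe_neg, EReal.coe_add, ← ha, ← hb]
    exact EReal.le_neg.1 h
  obtain ⟨hfs, hgs⟩ := EReal.eq_coe_and_eq_coe_of_add_le hfy hgy hsum
  exact ⟨mem_esubdiff_of_conj1_le ha hfs.le, mem_esubdiff_of_conj1_le hb hgs.le⟩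

theorem zero_mem_range_subdiff_sum_general
    (f g : X → EReal)
    (hfc : EConvexOn f) (hgc : EConvexOn g)
    (hfproper : (∀ x, f x ≠ ⊥) ∧ ∃ x, f x ≠ ⊤)
    (hgproper : (∀ x, g x ≠ ⊥) ∧ ∃ x, g x ≠ ⊤)
    (hdom : ∃ x, f x ≠ ⊤ ∧ g x ≠ ⊤)
    (hlsc1 : LowerSemicontinuousAt (infConv f (fun x => g (-x))) (0 : X))
    (hex1 : ExactAt f (fun x => g (-x)) (0 : X))
    (hex2 : ExactAt (conj1 f) (conj1 g) (0 : Dd X)) :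
    ∃ x : X, ∃ s ∈ esubdiff f x, ∃ t ∈ esubdiff g x, s + t = 0 := by
  obtain ⟨hfb, -⟩ := hfproper
  obtain ⟨hgb, -⟩ := hgproper
  obtain ⟨xd, hfd, hgd⟩ := hdom
  have htop : infConv f (fun x => g (-x)) 0 ≠ ⊤ := by
    refine ne_top_of_le_ne_top (EReal.add_ne_top hfd hgd) ?_
    simpa [infConv] using iInf_le (fun u => f (0 - u) + g (-u)) (-xd)
  have hgap := infConv_le_neg_infConv_conj1 hfc hgc hfb hgb hlsc1 htop
  obtain ⟨u, hu⟩ := hex1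
  obtain ⟨v, hv⟩ := hex2
  obtain ⟨hf, hg⟩ := mem_esubdiff_and_neg_mem_esubdiff (s := -v) (hfb (-u)) (hgb (-u))
    (by simpa [hu] using htop) (by simpa [hu, hv] using hgap)
  exact ⟨-u, -v, hf, - -v, hg, add_neg_cancel _⟩

/-- a closedness-type condition ensuring `0 ∈ R(∂f + ∂g)`. -/
theorem zero_mem_range_subdiff_sum [CompleteSpace X] (hX : Reflexive' X)
    (f g : X → EReal)
    (hfc : EConvexOn f) (hgc : EConvexOn g)
    (hfl : LowerSemicontinuous f) (hgl : LowerSemicontinuous g)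
    (hfproper : (∀ x, f x ≠ ⊥) ∧ ∃ x, f x ≠ ⊤)
    (hgproper : (∀ x, g x ≠ ⊥) ∧ ∃ x, g x ≠ ⊤)
    (hdom : ∃ x, f x ≠ ⊤ ∧ g x ≠ ⊤)
    (hdomstar : ∃ xs : Dd X, conj1 f xs ≠ ⊤ ∧ conj1 g (-xs) ≠ ⊤)
    (hlsc1 : LowerSemicontinuousAt (infConv f (fun x => g (-x))) (0 : X))
    (hex1 : ExactAt f (fun x => g (-x)) (0 : X))
    (hlsc2 : LowerSemicontinuousAt (infConv (conj1 f) (conj1 g)) (0 : Dd X))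
    (hex2 : ExactAt (conj1 f) (conj1 g) (0 : Dd X)) :
    ∃ x : X, ∃ s ∈ esubdiff f x, ∃ t ∈ esubdiff g x, s + t = 0 :=
  zero_mem_range_subdiff_sum_general f g hfc hgc hfproper hgproper hdom hlsc1 hex1 hex2
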